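/- arXiv:2512.09413 — 5 statements merged into one kernel-verified Lean document; each statement's English description precedes it below -/
import Mathlib

section
/- Let v = (v₁,v₂) : [0,1] → ℝ², λ ∈ ℂ, and let y : [0,1] → M₂(ℂ) be differentiable with J·y'(x) + V(x)·y(x) = λ·y(x) for all x ∈ [0,1], y(0) = I, and y(1) invertible. Define g(x) := J₁·y(1−x)·y(1)⁻¹·J₁. Then g is differentiable on [0,1] and satisfies J·g'(x) + V₁(x)·g(x) = λ·g(x), where V₁(x) = J₁·V(1−x)·J₁ is the Zakharov–Shabat matrix of u(x) = (v₁(1−x), −v₂(1−x)); moreover g(0) = I and g(1) = J₁·y(1)⁻¹·J₁. If in addition det y(1) = 1, then g(1) = [[y(1)₂₂, y(1)₁₂],[y(1)₂₁, y(1)₁₁]]. -/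
/-!
`J₁` is an involution anticommuting with `J`. Hence conjugating `J y' + V y = λ y` by `J₁`
and reversing time (which flips the sign of the derivative) yields the same equation with
potential `J₁ V J₁`, and right multiplication by the constant `y(1)⁻¹` preserves solutions
while normalising the value at `0` to `I`. For `det y(1) = 1`, `y(1)⁻¹` is the adjugate.
-/

open Set
open scoped Matrix
open scoped Matrix.Norms.L2Operator

noncomputable section

/-- The matrix `J = [[0,1],[-1,0]]` viewed as a complex matrix. -/
def Jm : Matrix (Fin 2) (Fin 2) ℂ := !![0, 1; -1, 0]

/-- The matrix `J₁ = [[1,0],[0,-1]]` viewed as a complex matrix. -/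
def J1m : Matrix (Fin 2) (Fin 2) ℂ := !![1, 0; 0, -1]

/-- The Zakharov–Shabat potential matrix `V(x) = [[v₁(x), v₂(x)],[v₂(x), -v₁(x)]]`
of a vector function `v = (v₁, v₂)`, viewed as a complex matrix. -/
def ZS (v : ℝ → ℝ × ℝ) (x : ℝ) : Matrix (Fin 2) (Fin 2) ℂ :=
  !![((v x).1 : ℂ), ((v x).2 : ℂ); ((v x).2 : ℂ), -((v x).1 : ℂ)]

lemma J1m_mul_self : J1m * J1m = 1 := by
  simp [J1m, Matrix.one_fin_two]

lemma Jm_mul_J1m : Jm * J1m = -(J1m * Jm) := by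
  simp [Jm, J1m]

lemma J1m_mul_ZS_mul_J1m (v : ℝ → ℝ × ℝ) (x : ℝ) :
    J1m * ZS v x * J1m = ZS (fun t => ((v t).1, -(v t).2)) x := by
  simp [J1m, ZS]

lemma J1m_mul_inv_mul_J1m_of_det_eq_one {A : Matrix (Fin 2) (Fin 2) ℂ} (hA : A.det = 1) :
    J1m * A⁻¹ * J1m = !![A 1 1, A 0 1; A 1 0, A 0 0] := by
  rw [Matrix.inv_def, hA, Matrix.adjugate_fin_two]
  simp [J1m]

lemma HasDerivWithinAt.comp_const_sub {F : Type*} [NormedAddCommGroup F] [NormedSpace ℝ F]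
    {f : ℝ → F} {f' : F} {s t : Set ℝ} {a x : ℝ} (hf : HasDerivWithinAt f f' s (a - x))
    (hst : MapsTo (a - ·) t s) :
    HasDerivWithinAt (fun u => f (a - u)) (-f') t x := by
  simpa [Function.comp_def] using hf.scomp x ((hasDerivWithinAt_id x t).const_sub a) hst

lemma mapsTo_one_sub_Icc : MapsTo ((1 : ℝ) - ·) (Icc 0 1) (Icc 0 1) :=
  fun _ ⟨h0, h1⟩ => ⟨by linarith, by linarith⟩

section Conjugation

variable {K R : Type*} [CommSemiring K] [Ring R] [Algebra K R]

lemma conj_reversed_eq_smul {j s V Y Y' : R} {lam : K} (hs : s * s = 1)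
    (hjs : j * s = -(s * j)) (h : j * Y' + V * Y = lam • Y) (C : R) :
    j * -(s * Y' * C * s) + (s * V * s) * (s * Y * C * s) = lam • (s * Y * C * s) := by
  have hj : j * -(s * Y' * C * s) = s * (j * Y') * C * s := by
    simp only [mul_neg, ← mul_assoc, hjs, neg_mul, neg_neg]
  have hV : (s * V * s) * (s * Y * C * s) = s * (V * Y) * C * s := by
    simp only [← mul_assoc]
    rw [mul_assoc (s * V) s s, hs, mul_one]
  rw [hj, hV, ← add_mul, ← add_mul, ← mul_add, h, mul_smul_comm, smul_mul_assoc, smul_mul_assoc]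

end Conjugation

/-- If `J·y' + V·y = λ·y` on `[0,1]`, `y(0) = I` and `y(1)` is invertible, then
`g(x) := J₁·y(1−x)·y(1)⁻¹·J₁` is differentiable and satisfies `J·g' + V₁·g = λ·g`,
where `V₁(x) = J₁·V(1−x)·J₁` is the Zakharov–Shabat matrix of
`u(x) = (v₁(1−x), −v₂(1−x))`; moreover `g(0) = I` and `g(1) = J₁·y(1)⁻¹·J₁`, and if
`det y(1) = 1` then `g(1) = [[y(1)₂₂, y(1)₁₂],[y(1)₂₁, y(1)₁₁]]`. -/
theorem stmt8 (v : ℝ → ℝ × ℝ) (lam : ℂ) (y y' : ℝ → Matrix (Fin 2) (Fin 2) ℂ)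
    (hderiv : ∀ x ∈ Icc (0 : ℝ) 1, HasDerivWithinAt y (y' x) (Icc 0 1) x)
    (hode : ∀ x ∈ Icc (0 : ℝ) 1, Jm * y' x + ZS v x * y x = lam • y x)
    (hinit : y 0 = 1) (hunit : IsUnit (y 1)) :
    (∀ x ∈ Icc (0 : ℝ) 1,
      HasDerivWithinAt (fun t => J1m * y (1 - t) * (y 1)⁻¹ * J1m)
        (-(J1m * y' (1 - x) * (y 1)⁻¹ * J1m)) (Icc 0 1) x ∧
      Jm * (-(J1m * y' (1 - x) * (y 1)⁻¹ * J1m)) +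
        (J1m * ZS v (1 - x) * J1m) * (J1m * y (1 - x) * (y 1)⁻¹ * J1m) =
          lam • (J1m * y (1 - x) * (y 1)⁻¹ * J1m)) ∧
    (∀ x ∈ Icc (0 : ℝ) 1,
      J1m * ZS v (1 - x) * J1m = ZS (fun t => ((v (1 - t)).1, -(v (1 - t)).2)) x) ∧
    J1m * y (1 - 0) * (y 1)⁻¹ * J1m = 1 ∧
    J1m * y (1 - 1) * (y 1)⁻¹ * J1m = J1m * (y 1)⁻¹ * J1m ∧
    ((y 1).det = 1 →
      J1m * y (1 - 1) * (y 1)⁻¹ * J1m =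
        !![y 1 1 1, y 1 0 1; y 1 1 0, y 1 0 0]) := by
  have hy1 : IsUnit (y 1).det := (Matrix.isUnit_iff_isUnit_det _).mp hunit
  have h10 : J1m * y (1 - 0) * (y 1)⁻¹ * J1m = 1 := by
    rw [sub_zero, mul_assoc J1m, Matrix.mul_nonsing_inv _ hy1, mul_one, J1m_mul_self]
  have h11 : J1m * y (1 - 1) * (y 1)⁻¹ * J1m = J1m * (y 1)⁻¹ * J1m := by
    rw [sub_self, hinit, mul_one]
  refine ⟨fun x hx => ⟨?_, ?_⟩, fun x _ => J1m_mul_ZS_mul_J1m (fun t => v (1 - t)) x, h10, h11,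
    fun hdet => h11.trans (J1m_mul_inv_mul_J1m_of_det_eq_one hdet)⟩
  · have hy := (hderiv (1 - x) (mapsTo_one_sub_Icc hx)).comp_const_sub mapsTo_one_sub_Icc
    simpa [mul_neg, neg_mul] using ((hy.const_mul J1m).mul_const (y 1)⁻¹).mul_const J1m
  · exact conj_reversed_eq_smul J1m_mul_self Jm_mul_J1m (hode (1 - x) (mapsTo_one_sub_Icc hx)) _
end
end

section
/- Let v = (v₁,v₂) : [0,1] → ℝ², λ ∈ ℂ, and let y : [0,1] → M₂(ℂ) be differentiable with J·y'(x) + V(x)·y(x) = λ·y(x) for all x ∈ [0,1]. Define f(x) := exp((π/2)x·J)·y(x). Then f satisfies J·f'(x) + (π/2)·f(x) + exp(πx·J)·V(x)·f(x) = λ·f(x) for all x ∈ [0,1], where exp(πx·J)·V(x) is the Zakharov–Shabat matrix of the rotated vector u(x) = exp(πx·J)·v(x) = (v₁(x)cos πx + v₂(x)sin πx, −v₁(x)sin πx + v₂(x)cos πx); moreover f(1) = J·y(1). -/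
open Set
open scoped Matrix
open scoped Matrix.Norms.L2Operator

noncomputable section

/-! Since `J² = -1`, the rotation `exp(θJ) = cos θ + sin θ · J` commutes with `J`, whereas every
Zakharov–Shabat matrix `V` anticommutes with `J`, so `V exp(θJ) = exp(-θJ) V`. Hence for
`f = exp((π/2)x J) y` the terms `J f'` and `exp(πx J) V f` become
`-(π/2) f + exp((π/2)x J) J y'` and `exp((π/2)x J) V y`, and the equation for `f` is the equation
for `y` multiplied by `exp((π/2)x J)`. At `x = 1`, `exp((π/2) J) = J`. -/

open NormedSpace

lemma Jm_mul_Jm : Jm * Jm = -1 := by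
  ext i j; fin_cases i <;> fin_cases j <;> simp [Jm, Matrix.mul_apply]

lemma exp_ofReal_smul_Jm (θ : ℝ) :
    exp ((θ : ℂ) • Jm) =
      (Real.cos θ : ℂ) • (1 : Matrix (Fin 2) (Fin 2) ℂ) + (Real.sin θ : ℂ) • Jm := by
  -- `z ↦ re z • 1 + im z • J` is a continuous algebra map `ℂ → M₂(ℂ)` sending `θ i` to `θ J`
  let φ : ℂ →ₐ[ℝ] Matrix (Fin 2) (Fin 2) ℂ := Complex.liftAux Jm Jm_mul_Jm
  have hφ : (θ : ℂ) • Jm = φ (θ * Complex.I) := by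
    simp [φ, Complex.liftAux_apply, Complex.coe_smul]
  rw [hφ, ← map_exp φ φ.toLinearMap.continuous_of_finiteDimensional, ← Complex.exp_eq_exp_ℂ]
  simp only [φ, Complex.liftAux_apply, Complex.exp_ofReal_mul_I_re, Algebra.algebraMap_eq_smul_one,
    Complex.exp_ofReal_mul_I_im, ← Complex.coe_smul]

lemma exp_pi_div_two_smul_Jm : exp (((Real.pi / 2 : ℝ) : ℂ) • Jm) = Jm := by
  rw [exp_ofReal_smul_Jm]
  simp

lemma exp_ofReal_smul_Jm_mul_exp_neg (θ : ℝ) :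
    exp ((θ : ℂ) • Jm) * exp (((-θ : ℝ) : ℂ) • Jm) = 1 := by
  rw [← Matrix.exp_add_of_commute _ _ ((Commute.refl Jm).smul_left _ |>.smul_right _)]
  simp

lemma hasDerivAt_exp_mul_smul_Jm (a x : ℝ) :
    HasDerivAt (fun t : ℝ => exp (((a * t : ℝ) : ℂ) • Jm))
      ((a : ℂ) • (exp (((a * x : ℝ) : ℂ) • Jm) * Jm)) x := by
  have hlin : HasDerivAt (fun t : ℝ => ((a * t : ℝ) : ℂ)) (a : ℂ) x := by
    simpa using ((hasDerivAt_id x).const_mul a).ofReal_comp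
  exact (hasDerivAt_exp_smul_const Jm ((a * x : ℝ) : ℂ)).scomp x hlin

lemma exp_ofReal_smul_Jm_mul_ZS (θ : ℝ → ℝ) (v : ℝ → ℝ × ℝ) (x : ℝ) :
    exp ((θ x : ℂ) • Jm) * ZS v x =
      ZS (fun t => ((v t).1 * Real.cos (θ t) + (v t).2 * Real.sin (θ t),
        -(v t).1 * Real.sin (θ t) + (v t).2 * Real.cos (θ t))) x := by
  rw [exp_ofReal_smul_Jm]
  ext i j; fin_cases i <;> fin_cases j <;> simp [Jm, ZS, Matrix.mul_apply] <;> ring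

lemma Jm_mul_ZS (v : ℝ → ℝ × ℝ) (x : ℝ) : Jm * ZS v x = -(ZS v x * Jm) := by
  ext i j; fin_cases i <;> fin_cases j <;> simp [Jm, ZS, Matrix.mul_apply]

lemma mul_exp_ofReal_smul_Jm_of_anticomm {V : Matrix (Fin 2) (Fin 2) ℂ} (hV : Jm * V = -(V * Jm))
    (θ : ℝ) : V * exp ((θ : ℂ) • Jm) = exp (((-θ : ℝ) : ℂ) • Jm) * V := by
  rw [exp_ofReal_smul_Jm, exp_ofReal_smul_Jm, Real.cos_neg, Real.sin_neg]
  simp only [Complex.ofReal_neg, mul_add, add_mul, mul_smul_comm, smul_mul_assoc, mul_one,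
    one_mul, neg_smul, neg_mul, hV, smul_neg, neg_neg]

-- For `f = exp(θJ) Y` with derivative `a exp(θJ) J Y + exp(θJ) Y'`, the left side is
-- `J f' + a f + exp(2θJ) V f`.
lemma Jm_mul_gauge_deriv_add {V : Matrix (Fin 2) (Fin 2) ℂ} (hV : Jm * V = -(V * Jm)) (a θ : ℝ)
    (Y Y' : Matrix (Fin 2) (Fin 2) ℂ) :
    Jm * ((a : ℂ) • (exp ((θ : ℂ) • Jm) * Jm) * Y + exp ((θ : ℂ) • Jm) * Y') +
        (a : ℂ) • (exp ((θ : ℂ) • Jm) * Y) + (exp (((2 * θ : ℝ) : ℂ) • Jm) * V) *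
        (exp ((θ : ℂ) • Jm) * Y) =
      exp ((θ : ℂ) • Jm) * (Jm * Y' + V * Y) := by
  set E := exp ((θ : ℂ) • Jm)
  have hJE : Jm * E = E * Jm := ((Commute.refl Jm).smul_right _).exp_right.eq
  have hE2 : exp (((2 * θ : ℝ) : ℂ) • Jm) = E * E := by
    rw [← Matrix.exp_add_of_commute _ _ (Commute.refl _), ← add_smul]
    push_cast; ring_nf
  have hEVE : E * E * V * E = E * V := by
    rw [mul_assoc _ V, mul_exp_ofReal_smul_Jm_of_anticomm hV, ← mul_assoc, mul_assoc E E,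
      exp_ofReal_smul_Jm_mul_exp_neg, mul_one]
  calc _ = (a : ℂ) • (E * (Jm * Jm) * Y) + (a : ℂ) • (E * Y) + E * (Jm * Y') +
        E * E * V * E * Y := by
          rw [hE2]; simp only [mul_add, mul_smul_comm, smul_mul_assoc, ← mul_assoc, hJE]; abel
    _ = E * (Jm * Y' + V * Y) := by
          rw [hEVE, Jm_mul_Jm]; simp only [mul_neg, mul_one, neg_mul, smul_neg, mul_add, mul_assoc]
          abel

/-- If `J·y' + V·y = λ·y` on `[0,1]`, then `f(x) := exp((π/2)x·J)·y(x)` satisfies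
`J·f' + (π/2)·f + exp(πx·J)·V(x)·f = λ·f`, where `exp(πx·J)·V(x)` is the Zakharov–Shabat
matrix of the rotated vector
`u(x) = (v₁cos πx + v₂ sin πx, −v₁ sin πx + v₂ cos πx)`; moreover `f(1) = J·y(1)`. -/
theorem stmt9 (v : ℝ → ℝ × ℝ) (lam : ℂ) (y y' : ℝ → Matrix (Fin 2) (Fin 2) ℂ)
    (hderiv : ∀ x ∈ Icc (0 : ℝ) 1, HasDerivWithinAt y (y' x) (Icc 0 1) x)
    (hode : ∀ x ∈ Icc (0 : ℝ) 1, Jm * y' x + ZS v x * y x = lam • y x) :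
    (∀ x ∈ Icc (0 : ℝ) 1,
      ∃ d : Matrix (Fin 2) (Fin 2) ℂ,
        HasDerivWithinAt
          (fun t : ℝ => NormedSpace.exp ((((Real.pi / 2) * t : ℝ) : ℂ) • Jm) * y t)
          d (Icc 0 1) x ∧
        Jm * d +
          ((Real.pi / 2 : ℝ) : ℂ) •
            (NormedSpace.exp ((((Real.pi / 2) * x : ℝ) : ℂ) • Jm) * y x) +
          (NormedSpace.exp (((Real.pi * x : ℝ) : ℂ) • Jm) * ZS v x) *
            (NormedSpace.exp ((((Real.pi / 2) * x : ℝ) : ℂ) • Jm) * y x) =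
          lam • (NormedSpace.exp ((((Real.pi / 2) * x : ℝ) : ℂ) • Jm) * y x)) ∧
    (∀ x : ℝ, NormedSpace.exp (((Real.pi * x : ℝ) : ℂ) • Jm) * ZS v x =
      ZS (fun t => ((v t).1 * Real.cos (Real.pi * t) + (v t).2 * Real.sin (Real.pi * t),
          -(v t).1 * Real.sin (Real.pi * t) + (v t).2 * Real.cos (Real.pi * t))) x) ∧
    NormedSpace.exp ((((Real.pi / 2) * 1 : ℝ) : ℂ) • Jm) * y 1 = Jm * y 1 := by
  refine ⟨fun x hx => ?_, fun x => exp_ofReal_smul_Jm_mul_ZS (fun t => Real.pi * t) v x, ?_⟩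
  · refine ⟨_, ((hasDerivAt_exp_mul_smul_Jm (Real.pi / 2) x).hasDerivWithinAt).mul (hderiv x hx),
      ?_⟩
    have hangle : Real.pi * x = 2 * (Real.pi / 2 * x) := by ring
    rw [hangle, Jm_mul_gauge_deriv_add (Jm_mul_ZS v x), hode x hx, Matrix.mul_smul]
  · rw [mul_one, exp_pi_div_two_smul_Jm]
end
end

section
/- There exists a constant C > 0 with the following property: for every real sequence ε = (εⱼ)_{j∈ℤ} ∈ ℓ²(ℤ) and every n ∈ ℤ, the series hₙ := Σ_{j∈ℤ, j≠n} εⱼ/(j−n) converges absolutely, and the resulting sequence (hₙ)_{n∈ℤ} belongs to ℓ²(ℤ) with Σ_{n∈ℤ} hₙ² ≤ C·Σ_{j∈ℤ} εⱼ² (boundedness of the discrete Hilbert transform on ℓ²(ℤ)). -/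
/-!
For finitely supported `ε`, expanding the square gives `∑ₙ hₙ² = ∑_{j,k} εⱼ εₖ Q(k - j)`, where
`Q(d) = ∑ₘ 1/(m(m + d))` is the autocorrelation of the kernel `1/m`. The partial fraction
`1/(m(m + d)) = (1/m - 1/(m + d))/d` telescopes, so `Q(d) = 2/d²` for `d ≠ 0`. Thus `Q ∈ ℓ¹(ℤ)`,
and Schur's test bounds the quadratic form by `‖Q‖₁ ∑ⱼ εⱼ²`. A general `ε ∈ ℓ²(ℤ)` is handled by
truncation, each `hₙ` being absolutely convergent by Cauchy–Schwarz.
-/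

open Filter Topology

section Telescoping

variable {G : Type*} [AddCommGroup G] [TopologicalSpace G] [IsTopologicalAddGroup G] [T2Space G]
  {f : ℤ → G}

theorem hasSum_sub_add_one_of_tendsto (hbot : Tendsto f atBot (𝓝 0))
    (htop : Tendsto f atTop (𝓝 0)) (hs : Summable fun m => f m - f (m + 1)) :
    HasSum (fun m => f m - f (m + 1)) 0 := by
  have hsym : Tendsto (fun N : ℕ => f (-N) - f N) atTop (𝓝 0) := by
    simpa using (hbot.comp (tendsto_neg_atTop_atBot.comp tendsto_natCast_atTop_atTop)).sub
      (htop.comp tendsto_natCast_atTop_atTop)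
  have hlim := (hs.hasSum.comp Finset.tendsto_Ico_neg).congr fun N => Finset.sum_Ico_int_sub N f
  exact tendsto_nhds_unique hlim hsym ▸ hs.hasSum

theorem hasSum_sub_add_of_tendsto (hbot : Tendsto f atBot (𝓝 0))
    (htop : Tendsto f atTop (𝓝 0)) (hs : Summable fun m => f m - f (m + 1)) (d : ℤ) :
    HasSum (fun m => f m - f (m + d)) 0 := by
  have hstep (e : ℤ) : HasSum (fun m => f (m + e) - f (m + e + 1)) 0 :=
    (Equiv.addRight e).hasSum_iff.mpr (hasSum_sub_add_one_of_tendsto hbot htop hs)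
  induction d using Int.induction_on with
  | zero => simp
  | succ e ih => simpa [← add_assoc] using ih.add (hstep e)
  | pred e ih => simpa [sub_eq_add_neg, add_assoc] using ih.sub (hstep (-e - 1))

end Telescoping

theorem summable_abs_mul_of_summable_sq {ι : Type*} {f g : ι → ℝ}
    (hf : Summable fun i => f i ^ 2) (hg : Summable fun i => g i ^ 2) :
    Summable fun i => |f i * g i| :=
  ((hf.add hg).div_const 2).of_nonneg_of_le (fun _ => abs_nonneg _) fun i => by
    rw [abs_mul]
    nlinarith [two_mul_le_add_sq |f i| |g i|, sq_abs (f i), sq_abs (g i)]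

theorem sum_sum_mul_mul_apply_sub_le {ι : Type*} [AddGroup ι] {Q : ι → ℝ}
    (hQ : Summable fun d => |Q d|) (s : Finset ι) (a : ι → ℝ) :
    ∑ j ∈ s, ∑ k ∈ s, a j * a k * Q (k - j) ≤ (∑' d, |Q d|) * ∑ j ∈ s, a j ^ 2 := by
  have hrow (j : ι) : ∑ k ∈ s, |Q (k - j)| ≤ ∑' d, |Q d| := by
    rw [← (Equiv.subRight j).tsum_eq]
    exact ((Equiv.subRight j).summable_iff.mpr hQ).sum_le_tsum s fun _ _ => abs_nonneg _
  have hcol (k : ι) : ∑ j ∈ s, |Q (k - j)| ≤ ∑' d, |Q d| := by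
    rw [← (Equiv.subLeft k).tsum_eq]
    exact ((Equiv.subLeft k).summable_iff.mpr hQ).sum_le_tsum s fun _ _ => abs_nonneg _
  calc ∑ j ∈ s, ∑ k ∈ s, a j * a k * Q (k - j)
      ≤ ∑ j ∈ s, ∑ k ∈ s, (a j ^ 2 / 2 * |Q (k - j)| + a k ^ 2 / 2 * |Q (k - j)|) := by
        gcongr with j _ k _
        nlinarith [two_mul_le_add_sq (a j) (a k), le_abs_self (Q (k - j)),
          neg_abs_le (Q (k - j)), abs_nonneg (Q (k - j)), sq_nonneg (a j + a k),
          sq_nonneg (a j - a k)]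
    _ = ∑ j ∈ s, a j ^ 2 / 2 * ∑ k ∈ s, |Q (k - j)|
        + ∑ k ∈ s, a k ^ 2 / 2 * ∑ j ∈ s, |Q (k - j)| := by
        simp only [Finset.sum_add_distrib, Finset.mul_sum]
        rw [Finset.sum_comm (f := fun j k => a k ^ 2 / 2 * |Q (k - j)|)]
    _ ≤ ∑ j ∈ s, a j ^ 2 / 2 * ∑' d, |Q d| + ∑ k ∈ s, a k ^ 2 / 2 * ∑' d, |Q d| := by
        gcongr with j _ k _
        exacts [hrow j, hcol k]
    _ = (∑' d, |Q d|) * ∑ j ∈ s, a j ^ 2 := by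
        rw [← Finset.sum_add_distrib, Finset.mul_sum]
        exact Finset.sum_congr rfl fun j _ => by ring

namespace DiscreteHilbert

-- `kernel 0 = 0` (as `0⁻¹ = 0`) encodes the exclusion of the term `j = n`.
noncomputable def kernel (m : ℤ) : ℝ := (m : ℝ)⁻¹

noncomputable def autocorr (d : ℤ) : ℝ := ∑' m, kernel m * kernel (m + d)

noncomputable def transform (ε : ℤ → ℝ) (n : ℤ) : ℝ := ∑' j, ε j * kernel (j - n)

theorem summable_kernel_sq : Summable fun m => kernel m ^ 2 :=
  (Real.summable_one_div_int_pow.mpr one_lt_two).congr fun m => by simp [kernel]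

theorem summable_kernel_add_sq (d : ℤ) : Summable fun m => kernel (m + d) ^ 2 :=
  (Equiv.addRight d).summable_iff.mpr summable_kernel_sq

theorem summable_kernel_mul_kernel_add (d : ℤ) :
    Summable fun m => kernel m * kernel (m + d) :=
  (summable_abs_mul_of_summable_sq summable_kernel_sq (summable_kernel_add_sq d)).of_abs

theorem tendsto_kernel_atTop : Tendsto kernel atTop (𝓝 0) :=
  tendsto_inv_atTop_zero.comp tendsto_intCast_atTop_atTop

theorem tendsto_kernel_atBot : Tendsto kernel atBot (𝓝 0) :=
  tendsto_inv_atBot_zero.comp (tendsto_intCast_atBot_iff.mpr tendsto_id)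

-- The indicator terms correct the partial fraction at `m = 0` and `m = -d`, where `kernel`
-- vanishes.
theorem kernel_mul_kernel_add {d : ℤ} (hd : d ≠ 0) (m : ℤ) :
    kernel m * kernel (m + d) = (kernel m - kernel (m + d)) / d
      + (if m = 0 then ((d : ℝ) ^ 2)⁻¹ else 0) + (if m = -d then ((d : ℝ) ^ 2)⁻¹ else 0) := by
  have hd' : (d : ℝ) ≠ 0 := by exact_mod_cast hd
  by_cases h0 : m = 0
  · subst h0
    simp only [kernel, Int.cast_zero, inv_zero, zero_add, zero_mul, zero_sub, ↓reduceIte,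
      zero_eq_neg, hd, add_zero]
    field_simp
    ring
  by_cases h1 : m = -d
  · subst h1
    simp only [kernel, Int.cast_neg, inv_neg, neg_add_cancel, Int.cast_zero, inv_zero, mul_zero,
      sub_zero, h0, ↓reduceIte, add_zero]
    field_simp
    ring
  have hm : (m : ℝ) ≠ 0 := by exact_mod_cast h0
  have hmd : (m : ℝ) + d ≠ 0 := by exact_mod_cast (fun h => h1 (by omega) : m + d ≠ 0)
  simp only [kernel, if_neg h0, if_neg h1, Int.cast_add]
  field_simp
  ring

theorem summable_kernel_sub_kernel_add_one : Summable fun m => kernel m - kernel (m + 1) := by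
  have h := (((summable_kernel_mul_kernel_add 1).sub (hasSum_ite_eq (0 : ℤ) (1 : ℝ)).summable).sub
    (hasSum_ite_eq (-1 : ℤ) (1 : ℝ)).summable)
  refine h.congr fun m => ?_
  simp only [kernel_mul_kernel_add one_ne_zero m, Int.cast_one, one_pow, inv_one, div_one]
  ring

theorem hasSum_kernel_mul_kernel_add {d : ℤ} (hd : d ≠ 0) :
    HasSum (fun m => kernel m * kernel (m + d)) (2 / (d : ℝ) ^ 2) := by
  have htel := hasSum_sub_add_of_tendsto tendsto_kernel_atBot tendsto_kernel_atTop
    summable_kernel_sub_kernel_add_one d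
  rw [funext (kernel_mul_kernel_add hd),
    show 2 / (d : ℝ) ^ 2 = 0 / d + ((d : ℝ) ^ 2)⁻¹ + ((d : ℝ) ^ 2)⁻¹ by rw [zero_div]; ring]
  exact ((htel.div_const _).add (hasSum_ite_eq _ _)).add (hasSum_ite_eq _ _)

theorem autocorr_of_ne_zero {d : ℤ} (hd : d ≠ 0) : autocorr d = 2 / (d : ℝ) ^ 2 :=
  (hasSum_kernel_mul_kernel_add hd).tsum_eq

theorem summable_autocorr : Summable autocorr :=
  (summable_kernel_sq.mul_left 2).congr_cofinite <| (eventually_cofinite_ne 0).mono fun d hd => by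
    simp [autocorr_of_ne_zero hd, kernel, div_eq_mul_inv]

theorem hasSum_kernel_sub_mul_kernel_sub (j k : ℤ) :
    HasSum (fun n => kernel (j - n) * kernel (k - n)) (autocorr (k - j)) := by
  have h := (Equiv.subLeft j).hasSum_iff.mpr (summable_kernel_mul_kernel_add (k - j)).hasSum
  refine h.congr_fun fun n => ?_
  simp only [Function.comp_apply, Equiv.subLeft_apply]
  ring_nf

theorem hasSum_sq_sum_mul_kernel (s : Finset ℤ) (ε : ℤ → ℝ) :
    HasSum (fun n => (∑ j ∈ s, ε j * kernel (j - n)) ^ 2)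
      (∑ j ∈ s, ∑ k ∈ s, ε j * ε k * autocorr (k - j)) := by
  simp only [sq, Finset.sum_mul_sum]
  refine hasSum_sum fun j _ => hasSum_sum fun k _ => ?_
  exact ((hasSum_kernel_sub_mul_kernel_sub j k).mul_left (ε j * ε k)).congr_fun fun n => by ring

theorem summable_abs_mul_kernel {ε : ℤ → ℝ} (hε : Summable fun j => ε j ^ 2) (n : ℤ) :
    Summable fun j => |ε j * kernel (j - n)| :=
  summable_abs_mul_of_summable_sq hε <| (Equiv.subRight n).summable_iff.mpr summable_kernel_sq

theorem sum_sq_transform_le {ε : ℤ → ℝ} (hε : Summable fun j => ε j ^ 2) (F : Finset ℤ) :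
    ∑ n ∈ F, transform ε n ^ 2 ≤ (∑' d, |autocorr d|) * ∑' j, ε j ^ 2 := by
  have htrunc (s : Finset ℤ) :
      ∑ n ∈ F, (∑ j ∈ s, ε j * kernel (j - n)) ^ 2 ≤ (∑' d, |autocorr d|) * ∑' j, ε j ^ 2 :=
    calc ∑ n ∈ F, (∑ j ∈ s, ε j * kernel (j - n)) ^ 2
        ≤ ∑ j ∈ s, ∑ k ∈ s, ε j * ε k * autocorr (k - j) :=
          (hasSum_sq_sum_mul_kernel s ε).summable.sum_le_tsum F (fun _ _ => sq_nonneg _) |>.trans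
            (hasSum_sq_sum_mul_kernel s ε).tsum_eq.le
      _ ≤ (∑' d, |autocorr d|) * ∑ j ∈ s, ε j ^ 2 :=
          sum_sum_mul_mul_apply_sub_le summable_autocorr.abs s ε
      _ ≤ (∑' d, |autocorr d|) * ∑' j, ε j ^ 2 :=
          mul_le_mul_of_nonneg_left (hε.sum_le_tsum s fun _ _ => sq_nonneg _)
            (tsum_nonneg fun _ => abs_nonneg _)
  have hlim : Tendsto (fun s : Finset ℤ => ∑ n ∈ F, (∑ j ∈ s, ε j * kernel (j - n)) ^ 2) atTop
      (𝓝 (∑ n ∈ F, transform ε n ^ 2)) :=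
    tendsto_finsetSum F fun n _ => ((summable_abs_mul_kernel hε n).of_abs.hasSum.pow 2)
  exact le_of_tendsto' hlim htrunc

theorem summable_sq_transform {ε : ℤ → ℝ} (hε : Summable fun j => ε j ^ 2) :
    Summable fun n => transform ε n ^ 2 :=
  summable_of_sum_le (fun _ => sq_nonneg _) (sum_sq_transform_le hε)

theorem tsum_sq_transform_le {ε : ℤ → ℝ} (hε : Summable fun j => ε j ^ 2) :
    ∑' n, transform ε n ^ 2 ≤ (∑' d, |autocorr d|) * ∑' j, ε j ^ 2 :=
  (summable_sq_transform hε).tsum_le_of_sum_le (sum_sq_transform_le hε)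

theorem tsum_abs_autocorr_pos : 0 < ∑' d, |autocorr d| :=
  summable_autocorr.abs.tsum_pos (fun _ => abs_nonneg _) 1
    (by norm_num [autocorr_of_ne_zero one_ne_zero])

theorem ite_div_eq_mul_kernel (ε : ℤ → ℝ) (n j : ℤ) :
    (if j = n then 0 else ε j / ((j - n : ℤ) : ℝ)) = ε j * kernel (j - n) := by
  split_ifs with h <;> simp [kernel, h, div_eq_mul_inv]

end DiscreteHilbert

/-- Boundedness of the discrete Hilbert transform on `ℓ²(ℤ)`: there is `C > 0` such that
for every `ε ∈ ℓ²(ℤ)` the series `hₙ = Σ_{j≠n} εⱼ/(j−n)` converges absolutely for each `n`,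
and `Σₙ hₙ² ≤ C·Σⱼ εⱼ²`. -/
theorem stmt13 :
    ∃ C : ℝ, 0 < C ∧ ∀ ε : ℤ → ℝ, Summable (fun j : ℤ => ε j ^ 2) →
      (∀ n : ℤ, Summable fun j : ℤ =>
        |if j = n then 0 else ε j / ((j - n : ℤ) : ℝ)|) ∧
      Summable (fun n : ℤ =>
        (∑' j : ℤ, if j = n then 0 else ε j / ((j - n : ℤ) : ℝ)) ^ 2) ∧
      ∑' n : ℤ, (∑' j : ℤ, if j = n then 0 else ε j / ((j - n : ℤ) : ℝ)) ^ 2 ≤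
        C * ∑' j : ℤ, ε j ^ 2 := by
  refine ⟨_, DiscreteHilbert.tsum_abs_autocorr_pos, fun ε hε => ?_⟩
  simp only [DiscreteHilbert.ite_div_eq_mul_kernel]
  exact ⟨DiscreteHilbert.summable_abs_mul_kernel hε, DiscreteHilbert.summable_sq_transform hε,
    DiscreteHilbert.tsum_sq_transform_le hε⟩
end

section
/- For every real sequence ε = (εⱼ)_{j∈ℤ} ∈ ℓ²(ℤ), the double series Σ_{n∈ℤ} Σ_{j∈ℤ, j≠n} (εⱼ − εₙ)²/(j−n)² converges (is finite). -/
/-!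
Off the diagonal, `(εⱼ - εₙ)² ≤ 2 (εⱼ² + εₙ²)`, so the double series is dominated by two series of
the form `Σ_{(n,j)} εₙ² / (n - j)²`. The substitution `k = n - j` turns each of them into the
product of `Σₙ εₙ²` with `Σₖ 1 / k²`, both of which converge.
-/

open Function

lemma summable_div_sq_int_sub_left {f : ℤ → ℝ} (hf : Summable f) :
    Summable fun p : ℤ × ℤ => f p.1 / ((p.1 - p.2 : ℤ) : ℝ) ^ 2 := by
  have hk : Summable fun k : ℤ => 1 / (k : ℝ) ^ 2 :=
    Real.summable_one_div_int_pow.mpr one_lt_two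
  rw [← (Equiv.prodShear (Equiv.refl ℤ) Equiv.subLeft).summable_iff]
  refine (summable_mul_of_summable_norm hf.norm hk.norm).congr fun p => ?_
  simp [div_eq_mul_inv]

lemma summable_div_sq_int_sub_right {f : ℤ → ℝ} (hf : Summable f) :
    Summable fun p : ℤ × ℤ => f p.2 / ((p.1 - p.2 : ℤ) : ℝ) ^ 2 := by
  rw [← (Equiv.prodComm ℤ ℤ).summable_iff]
  refine (summable_div_sq_int_sub_left hf).congr fun p => ?_
  simp only [comp_apply, Equiv.prodComm_apply, Prod.fst_swap, Prod.snd_swap, ← neg_sub p.1 p.2,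
    Int.cast_neg, neg_sq]

/-- For every `ε ∈ ℓ²(ℤ)`, the double series `Σₙ Σ_{j≠n} (εⱼ − εₙ)²/(j−n)²` is finite. -/
theorem stmt14 (ε : ℤ → ℝ) (hε : Summable fun j : ℤ => ε j ^ 2) :
    Summable (fun p : ℤ × ℤ =>
      if p.1 = p.2 then 0 else (ε p.1 - ε p.2) ^ 2 / ((p.1 - p.2 : ℤ) : ℝ) ^ 2) := by
  have hdom : Summable fun p : ℤ × ℤ =>
      2 * (ε p.1 ^ 2 + ε p.2 ^ 2) / ((p.1 - p.2 : ℤ) : ℝ) ^ 2 := by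
    refine (((summable_div_sq_int_sub_left hε).add
      (summable_div_sq_int_sub_right hε)).mul_left 2).congr fun p => ?_
    rw [← add_div, mul_div_assoc]
  refine hdom.of_nonneg_of_le (fun p => by split_ifs <;> positivity) fun p => ?_
  split_ifs
  · positivity
  · gcongr
    simpa only [← sub_eq_add_neg, neg_sq] using add_sq_le (a := ε p.1) (b := -ε p.2)
end

section
/- Let v = (v₁,v₂) : [0,1] → ℝ², τ ∈ ℝ, and let φ = (φ₁,φ₂) : [0,1] → ℝ² be differentiable with J·φ'(x) + V(x)·φ(x) = τ·φ(x) for all x ∈ [0,1], φ₁(0) = 0 and φ₂(1) = 0 (a mixed-boundary-condition eigenfunction). Define the even-odd extension of the potential on [0,2] by Ṽ(x) = V(x) for x ∈ [0,1] and Ṽ(x) = J₁·V(2−x)·J₁ for x ∈ (1,2], and define g : [0,2] → ℝ² by g(x) = φ(x) for x ∈ [0,1] and g(x) = J₁·φ(2−x) for x ∈ [1,2]. Then g is continuous at x = 1 (the two definitions agree there), g is differentiable on (1,2) with J·g'(x) + Ṽ(x)·g(x) = τ·g(x) there, and g₁(0) = g₁(2) = 0; i.e., the mixed eigenvalue τ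 becomes a Dirichlet eigenvalue on [0,2] for the extended potential. -/
open Set Matrix

noncomputable section

/-- The real matrix `J = [[0,1],[-1,0]]`. -/
def JR : Matrix (Fin 2) (Fin 2) ℝ := !![0, 1; -1, 0]

/-- The real matrix `J₁ = [[1,0],[0,-1]]`. -/
def J1R : Matrix (Fin 2) (Fin 2) ℝ := !![1, 0; 0, -1]

/-- The Zakharov–Shabat potential matrix `V(x) = [[v₁(x), v₂(x)],[v₂(x), -v₁(x)]]`
of a real vector function `v = (v₁, v₂)`. -/
def ZSR (v : ℝ → ℝ × ℝ) (x : ℝ) : Matrix (Fin 2) (Fin 2) ℝ :=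
  !![(v x).1, (v x).2; (v x).2, -(v x).1]

/-!
Reflection `x ↦ 2 - x` reverses the sign of the derivative, and `J₁` anticommutes with `J`
while being an involution. Hence `J₁ φ(2 - x)` solves `J g' + (J₁ V(2 - x) J₁) g = τ g`
on `(1, 2)` for any potential. The boundary condition `φ₂(1) = 0` says `J₁ φ(1) = φ(1)`,
so the two halves of `g` match at `1`, and `J₁` preserves first components, so
`g₁(2) = φ₁(0) = 0`.
-/

theorem continuousWithinAt_Icc_if_le {α E : Type*} [LinearOrder α] [TopologicalSpace α]
    [TopologicalSpace E] {f₁ f₂ : α → E} {a b c : α}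
    (h₁ : ContinuousWithinAt f₁ (Icc a b) b) (h₂ : ContinuousWithinAt f₂ (Icc b c) b)
    (h : f₁ b = f₂ b) :
    ContinuousWithinAt (fun x => if x ≤ b then f₁ x else f₂ x) (Icc a c) b := by
  have left : ContinuousWithinAt (fun x => if x ≤ b then f₁ x else f₂ x) (Icc a b) b :=
    h₁.congr (fun y hy => if_pos hy.2) (if_pos le_rfl)
  have right : ContinuousWithinAt (fun x => if x ≤ b then f₁ x else f₂ x) (Icc b c) b := by
    refine h₂.congr (fun y hy => ?_) (by simp [h])
    rcases hy.1.eq_or_lt with rfl | hby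
    · simp [h]
    · simp [not_le.mpr hby]
  exact (left.union right).mono Icc_subset_Icc_union_Icc

theorem HasDerivAt.const_mulVec {m n : Type*} [Fintype m] [Fintype n]
    (A : Matrix m n ℝ) {f : ℝ → n → ℝ} {f' : n → ℝ} {x : ℝ} (hf : HasDerivAt f f' x) :
    HasDerivAt (fun t => A *ᵥ f t) (A *ᵥ f') x :=
  (LinearMap.toContinuousLinearMap (mulVecLin A)).hasFDerivAt.comp_hasDerivAt x hf

theorem J1R_mul_J1R : J1R * J1R = 1 := by
  ext i j; fin_cases i <;> fin_cases j <;> simp [J1R]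

theorem JR_mul_J1R : JR * J1R = -(J1R * JR) := by
  ext i j; fin_cases i <;> fin_cases j <;> simp [JR, J1R]

theorem J1R_mulVec_apply_zero (w : Fin 2 → ℝ) : (J1R *ᵥ w) 0 = w 0 := by
  simp [J1R, mulVec, dotProduct]

theorem J1R_mulVec_eq_self_of_apply_one_eq_zero {w : Fin 2 → ℝ} (hw : w 1 = 0) :
    J1R *ᵥ w = w := by
  ext i; fin_cases i <;> simp [J1R, mulVec, dotProduct, hw]

theorem JR_mulVec_neg_J1R_mulVec_add (V : Matrix (Fin 2) (Fin 2) ℝ) (p w : Fin 2 → ℝ) :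
    JR *ᵥ -(J1R *ᵥ p) + (J1R * V * J1R) *ᵥ (J1R *ᵥ w) = J1R *ᵥ (JR *ᵥ p + V *ᵥ w) := by
  rw [mulVec_mulVec, Matrix.mul_assoc _ J1R, J1R_mul_J1R, Matrix.mul_one, mulVec_neg,
    mulVec_mulVec, JR_mul_J1R, neg_mulVec, neg_neg, mulVec_add, mulVec_mulVec, mulVec_mulVec]

/-- If `φ` is a mixed-boundary-condition eigenfunction of `J·φ' + V·φ = τ·φ` on `[0,1]`
(`φ₁(0) = φ₂(1) = 0`), then its reflection `g` (with `g(x) = J₁·φ(2−x)` on `[1,2]`) is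
continuous at `x = 1`, satisfies `J·g' + Ṽ·g = τ·g` on `(1,2)` for the even-odd extension
`Ṽ` of the potential, and `g₁(0) = g₁(2) = 0`: the mixed eigenvalue `τ` becomes a Dirichlet
eigenvalue on `[0,2]` for `Ṽ`. -/
theorem stmt17 (v : ℝ → ℝ × ℝ) (τ : ℝ) (φ φ' : ℝ → Fin 2 → ℝ)
    (hderiv : ∀ x ∈ Icc (0 : ℝ) 1, HasDerivWithinAt φ (φ' x) (Icc 0 1) x)
    (hode : ∀ x ∈ Icc (0 : ℝ) 1,
      JR.mulVec (φ' x) + (ZSR v x).mulVec (φ x) = τ • φ x)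
    (hbc0 : φ 0 0 = 0) (hbc1 : φ 1 1 = 0)
    (W : ℝ → Matrix (Fin 2) (Fin 2) ℝ)
    (hW : ∀ x : ℝ, W x = if x ≤ 1 then ZSR v x else J1R * ZSR v (2 - x) * J1R)
    (g : ℝ → Fin 2 → ℝ)
    (hg : ∀ x : ℝ, g x = if x ≤ 1 then φ x else J1R.mulVec (φ (2 - x))) :
    J1R.mulVec (φ 1) = φ 1 ∧
    ContinuousWithinAt g (Icc 0 2) 1 ∧
    (∀ x ∈ Ioo (1 : ℝ) 2,
      HasDerivAt g (-(J1R.mulVec (φ' (2 - x)))) x ∧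
      JR.mulVec (-(J1R.mulVec (φ' (2 - x)))) + (W x).mulVec (g x) = τ • g x) ∧
    g 0 0 = 0 ∧ g 2 0 = 0 := by
  obtain rfl : g = _ := funext hg
  have hφ1 : J1R *ᵥ φ 1 = φ 1 := J1R_mulVec_eq_self_of_apply_one_eq_zero hbc1
  refine ⟨hφ1, ?_, fun x hx => ?_, by simp [hbc0], by simp [J1R_mulVec_apply_zero, hbc0]⟩
  · have hφ : ContinuousWithinAt φ (Icc 0 1) 1 := (hderiv 1 (by simp)).continuousWithinAt
    refine continuousWithinAt_Icc_if_le hφ ?_ (by norm_num [hφ1])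
    have hrefl : ContinuousWithinAt (fun x : ℝ => φ (2 - x)) (Icc 1 2) 1 :=
      hφ.comp_of_eq (continuous_sub_left 2).continuousWithinAt
        (fun y hy => ⟨by linarith [hy.2], by linarith [hy.1]⟩) (by norm_num)
    exact (continuous_const.matrix_mulVec continuous_id).continuousAt.comp_continuousWithinAt hrefl
  · have hx1 : ¬ x ≤ 1 := not_le.mpr hx.1
    have hy : 2 - x ∈ Ioo (0 : ℝ) 1 := ⟨by linarith [hx.2], by linarith [hx.1]⟩
    have hφ : HasDerivAt φ (φ' (2 - x)) (2 - x) :=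
      (hderiv _ (Ioo_subset_Icc_self hy)).hasDerivAt (Icc_mem_nhds hy.1 hy.2)
    constructor
    · have hnear : (fun t => if t ≤ 1 then φ t else J1R *ᵥ φ (2 - t)) =ᶠ[nhds x]
          fun t => J1R *ᵥ φ (2 - t) := by
        filter_upwards [Ioi_mem_nhds hx.1] with t ht using if_neg (not_le.mpr ht)
      simpa [mulVec_neg] using ((hφ.comp_const_sub 2 x).const_mulVec J1R).congr_of_eventuallyEq
        hnear
    · simp only [hW, hx1, if_false, JR_mulVec_neg_J1R_mulVec_add, hode _ (Ioo_subset_Icc_self hy),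
        mulVec_smul]
end
end
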